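/- arXiv:1503.03837 — 3 statements merged into one kernel-verified Lean document; each statement's English description precedes it below -/
import Mathlib

section
/- For every topological pair (X, Y) and every degree i, the change of coefficients homomorphism from H_i(X, Y; ℚ) to H_i(X, Y; ℝ) is norm-preserving with respect to the L¹-seminorms induced by the norms on ℚ-chains and ℝ-chains respectively. In particular, the ℓ¹-seminorm of a rational homology class equals the ℓ¹-seminorm of its image in real homology. -/
/- Minimal development of singular chains, ℓ¹-norms, and relative homology seminorms. -/

open scoped BigOperators
noncomputable section

/-- The topological standard `n`-simplex. -/
abbrev TopSimplex (n : ℕ) : Type := (stdSimplex ℝ (Fin (n + 1)) : Set (Fin (n + 1) → ℝ))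

/-- Singular `n`-simplices of a topological space `X`. -/
abbrev SingularSimplex (n : ℕ) (X : Type*) [TopologicalSpace X] : Type _ :=
  C(TopSimplex n, X)

/-- The `i`-th face inclusion of the standard `n`-simplex into the standard `n+1`-simplex. -/
def faceIncl {n : ℕ} (i : Fin (n + 2)) : C(TopSimplex n, TopSimplex (n + 1)) where
  toFun x := ⟨i.insertNth 0 x.1, by
    constructor
    · intro j
      refine i.succAboveCases ?_ (fun j => ?_) j
      · simp
      · simpa using x.2.1 j
    · rw [Fin.sum_univ_succAbove _ i]
      simpa using x.2.2⟩
  continuous_toFun := by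
    apply Continuous.subtype_mk
    refine continuous_pi fun j => ?_
    refine i.succAboveCases (α := fun j => Continuous fun x : TopSimplex n =>
      Fin.insertNth (α := fun _ => ℝ) i 0 x.1 j) ?_ (fun j => ?_) j
    · simp only [Fin.insertNth_apply_same]
      exact continuous_const
    · simp only [Fin.insertNth_apply_succAbove]
      exact (continuous_apply _).comp continuous_subtype_val

/-- Singular `n`-chains of `X` with coefficients in `R`, as finitely supported functions
on singular simplices. -/
abbrev SingularChain (n : ℕ) (X : Type*) [TopologicalSpace X] (R : Type*) [Ring R] :
    Type _ := SingularSimplex n X →₀ R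

variable {X : Type*} [TopologicalSpace X] {R : Type*}

/-- The boundary operator on singular chains. -/
def chainBoundary [Ring R] : ∀ {n : ℕ}, SingularChain n X R → SingularChain (n - 1) X R
  | 0, _ => 0
  | (_ + 1), c =>
      c.sum fun σ a => ∑ i, Finsupp.single (σ.comp (faceIncl i)) (a * (-1) ^ (i : ℕ))

/-- A singular simplex is supported in the subspace `Y`. -/
def SimplexIn {n : ℕ} (Y : Set X) (σ : SingularSimplex n X) : Prop := Set.range σ ⊆ Y

open scoped Classical in
/-- The relative ℓ¹-norm of a chain: the sum of the absolute values of the coefficients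
of the simplices not supported in `Y`. -/
def relNorm [NormedRing R] {n : ℕ} (Y : Set X) (c : SingularChain n X R) : ℝ :=
  ∑ σ ∈ c.support, if SimplexIn Y σ then 0 else ‖c σ‖

/-- `c` is a relative cycle of the pair `(X, Y)`: its boundary is supported in `Y`. -/
def IsRelCycle [Ring R] {n : ℕ} (Y : Set X) (c : SingularChain n X R) : Prop :=
  ∀ σ, ¬ SimplexIn Y σ → chainBoundary c σ = 0

/-- The boundary operator on `(n+1)`-chains, with its natural target. -/
def chainBoundarySucc [Ring R] {n : ℕ} (c : SingularChain (n + 1) X R) :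
    SingularChain n X R :=
  chainBoundary c

/-- Two relative chains are homologous in the pair `(X, Y)`: their difference is a
boundary, up to chains supported in `Y`.  In particular `[z] = [w]` in `H_n(X, Y; R)`. -/
def RelHomologous [Ring R] {n : ℕ} (Y : Set X) (z w : SingularChain n X R) : Prop :=
  ∃ b : SingularChain (n + 1) X R, ∀ σ, ¬ SimplexIn Y σ → (z - w - chainBoundarySucc b) σ = 0

/-- The ℓ¹-seminorm of the relative homology class of the chain `z`:
the infimum of the relative ℓ¹-norms of the chains homologous to `z`. -/
def classNorm [NormedRing R] {n : ℕ} (Y : Set X) (z : SingularChain n X R) : ℝ :=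
  sInf {r : ℝ | ∃ w : SingularChain n X R, RelHomologous Y z w ∧ r = relNorm Y w}

/-- Change of coefficients from rational chains to real chains. -/
def chainToReal {n : ℕ} (c : SingularChain n X ℚ) : SingularChain n X ℝ :=
  c.mapRange Rat.cast (by simp)

/-- Change of coefficients from integral chains to real chains. -/
def intChainToReal {n : ℕ} (c : SingularChain n X ℤ) : SingularChain n X ℝ :=
  c.mapRange Int.cast (by simp)

/-- Pushforward of chains along a continuous map. -/
def chainMap [Ring R] {Y : Type*} [TopologicalSpace Y] {n : ℕ} (f : C(X, Y))
    (c : SingularChain n X R) : SingularChain n Y R :=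
  c.sum fun σ a => Finsupp.single (f.comp σ) a

end

/-
A rational representative of the class of `z` is also a real representative of the class of its
image, with the same ℓ¹-norm; this gives `‖z‖_ℝ ≤ ‖z‖_ℚ`. Conversely, a real representative `w`
agrees off `Y` with `z - ∂b` for a real `(i+1)`-chain `b`. Rational chains are ℓ¹-dense in real
ones, and `∂` raises the ℓ¹-norm of `(i+1)`-chains by a factor at most `i + 2`; so replacing `b`
by a rational chain `q` with `‖b - q‖₁ < ε / (i + 2)` yields the rational representative
`z - ∂q` of norm at most `‖w‖ + ε`.
-/

section ChainNorms

variable {X : Type*} [TopologicalSpace X] {R : Type*} {n : ℕ}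

section NormedRing

variable [NormedRing R]

noncomputable def l1Norm (c : SingularChain n X R) : ℝ :=
  c.sum fun _ a => ‖a‖

lemma l1Norm_add_le (c d : SingularChain n X R) : l1Norm (c + d) ≤ l1Norm c + l1Norm d := by
  classical
  simp only [l1Norm]
  rw [Finsupp.sum_of_support_subset _ Finsupp.support_add _ (by simp),
    Finsupp.sum_of_support_subset c Finset.subset_union_left _ (by simp),
    Finsupp.sum_of_support_subset d Finset.subset_union_right _ (by simp),
    ← Finset.sum_add_distrib]
  exact Finset.sum_le_sum fun σ _ => norm_add_le (c σ) (d σ)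

lemma l1Norm_sum_le {ι : Type*} (s : Finset ι) (c : ι → SingularChain n X R) :
    l1Norm (∑ j ∈ s, c j) ≤ ∑ j ∈ s, l1Norm (c j) :=
  Finset.le_sum_of_subadditive l1Norm (by simp [l1Norm]) l1Norm_add_le s c

lemma l1Norm_single (σ : SingularSimplex n X) (a : R) : l1Norm (Finsupp.single σ a) = ‖a‖ :=
  Finsupp.sum_single_index norm_zero

lemma l1Norm_chainBoundarySucc_le (c : SingularChain (n + 1) X R) :
    l1Norm (chainBoundarySucc c) ≤ (n + 2) * l1Norm c := by
  have norm_mul_sign (a : R) (j : ℕ) : ‖a * (-1) ^ j‖ = ‖a‖ := by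
    rcases neg_one_pow_eq_or R j with h | h <;> simp [h]
  calc l1Norm (chainBoundarySucc c)
      ≤ ∑ σ ∈ c.support, ∑ j : Fin (n + 2), ‖c σ * (-1) ^ (j : ℕ)‖ := by
        refine (l1Norm_sum_le _ _).trans (Finset.sum_le_sum fun σ _ => ?_)
        refine (l1Norm_sum_le _ _).trans_eq ?_
        simp only [l1Norm_single]
        rfl
    _ = (n + 2) * l1Norm c := by
        simp [norm_mul_sign, l1Norm, Finsupp.sum, Finset.mul_sum]

lemma relNorm_nonneg (Y : Set X) (c : SingularChain n X R) : 0 ≤ relNorm Y c :=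
  Finset.sum_nonneg fun σ _ => by split <;> positivity

lemma relNorm_le_l1Norm (Y : Set X) (c : SingularChain n X R) : relNorm Y c ≤ l1Norm c :=
  Finset.sum_le_sum fun σ _ => by split <;> simp

open scoped Classical in
lemma relNorm_eq_sum_of_support_subset (Y : Set X) {c : SingularChain n X R}
    {s : Finset (SingularSimplex n X)} (hs : c.support ⊆ s) :
    relNorm Y c = ∑ σ ∈ s, if SimplexIn Y σ then 0 else ‖c σ‖ :=
  Finsupp.sum_of_support_subset c hs (fun σ a => if SimplexIn Y σ then 0 else ‖a‖) (by simp)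

lemma relNorm_add_le (Y : Set X) (c d : SingularChain n X R) :
    relNorm Y (c + d) ≤ relNorm Y c + relNorm Y d := by
  classical
  rw [relNorm_eq_sum_of_support_subset Y Finsupp.support_add,
    relNorm_eq_sum_of_support_subset Y Finset.subset_union_left,
    relNorm_eq_sum_of_support_subset Y Finset.subset_union_right, ← Finset.sum_add_distrib]
  exact Finset.sum_le_sum fun σ _ => by split <;> simp [norm_add_le]

lemma relNorm_congr (Y : Set X) {c d : SingularChain n X R}
    (h : ∀ σ, ¬ SimplexIn Y σ → c σ = d σ) : relNorm Y c = relNorm Y d := by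
  classical
  rw [relNorm_eq_sum_of_support_subset Y (Finset.subset_union_left (s₂ := d.support)),
    relNorm_eq_sum_of_support_subset Y (Finset.subset_union_right (s₁ := c.support))]
  exact Finset.sum_congr rfl fun σ _ => by split_ifs with hσ <;> simp [h σ, *]

end NormedRing

section Boundary

variable [Ring R]

noncomputable def chainBoundaryHom (n : ℕ) : SingularChain (n + 1) X R →+ SingularChain n X R :=
  Finsupp.liftAddHom fun σ => ∑ j : Fin (n + 2),
    (Finsupp.singleAddHom (σ.comp (faceIncl j))).comp (AddMonoidHom.mulRight ((-1) ^ (j : ℕ)))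

lemma chainBoundaryHom_apply (c : SingularChain (n + 1) X R) :
    chainBoundaryHom n c = chainBoundarySucc c := by
  rw [chainBoundaryHom, Finsupp.liftAddHom_apply]
  show _ = c.sum fun σ a => ∑ j, Finsupp.single (σ.comp (faceIncl j)) (a * (-1) ^ (j : ℕ))
  exact Finsupp.sum_congr fun σ _ => by simp only [AddMonoidHom.finsetSum_apply]; rfl

lemma chainBoundarySucc_sub (c d : SingularChain (n + 1) X R) :
    chainBoundarySucc (c - d) = chainBoundarySucc c - chainBoundarySucc d := by
  simp only [← chainBoundaryHom_apply, map_sub]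

lemma mapRange_chainBoundarySucc {S : Type*} [Ring S] (f : R →+* S)
    (c : SingularChain (n + 1) X R) :
    (chainBoundarySucc c).mapRange f f.map_zero =
      chainBoundarySucc (c.mapRange f f.map_zero) := by
  simp only [← chainBoundaryHom_apply]
  show ((Finsupp.mapRange.addMonoidHom f.toAddMonoidHom).comp (chainBoundaryHom n)) c =
    ((chainBoundaryHom n).comp (Finsupp.mapRange.addMonoidHom f.toAddMonoidHom)) c
  congr 1
  refine Finsupp.addHom_ext fun σ a => ?_
  simp only [AddMonoidHom.comp_apply, Finsupp.mapRange.addMonoidHom_apply, chainBoundaryHom,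
    Finsupp.liftAddHom_apply_single, Finsupp.mapRange_single, AddMonoidHom.finsetSum_apply,
    Finsupp.mapRange_finsetSum, Finsupp.singleAddHom_apply, AddMonoidHom.coe_mulRight,
    RingHom.toAddMonoidHom_eq_coe, AddMonoidHom.coe_coe, map_mul, map_pow, map_neg, map_one]

lemma relHomologous_sub_chainBoundarySucc (Y : Set X) (z : SingularChain n X R)
    (b : SingularChain (n + 1) X R) : RelHomologous Y z (z - chainBoundarySucc b) :=
  ⟨b, fun σ _ => by simp⟩

lemma relHomologous_refl (Y : Set X) (z : SingularChain n X R) : RelHomologous Y z z :=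
  ⟨0, fun σ _ => by simp [← chainBoundaryHom_apply]⟩

end Boundary

section ClassNorm

variable [NormedRing R] {Y : Set X} {z w : SingularChain n X R}

lemma classNorm_le_relNorm (h : RelHomologous Y z w) : classNorm Y z ≤ relNorm Y w :=
  csInf_le ⟨0, by rintro _ ⟨w, -, rfl⟩; exact relNorm_nonneg Y w⟩ ⟨w, h, rfl⟩

lemma le_classNorm {r : ℝ} (h : ∀ w, RelHomologous Y z w → r ≤ relNorm Y w) :
    r ≤ classNorm Y z :=
  le_csInf ⟨_, z, relHomologous_refl Y z, rfl⟩ (by rintro _ ⟨w, hw, rfl⟩; exact h w hw)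

end ClassNorm

section RatToReal

lemma chainToReal_sub (c d : SingularChain n X ℚ) :
    chainToReal (c - d) = chainToReal c - chainToReal d :=
  Finsupp.mapRange_sub Rat.cast_sub c d

lemma chainToReal_chainBoundarySucc (c : SingularChain (n + 1) X ℚ) :
    chainToReal (chainBoundarySucc c) = chainBoundarySucc (chainToReal c) :=
  mapRange_chainBoundarySucc (Rat.castHom ℝ) c

lemma relNorm_chainToReal (Y : Set X) (c : SingularChain n X ℚ) :
    relNorm Y (chainToReal c) = relNorm Y c := by
  rw [relNorm, relNorm, chainToReal,
    Finsupp.support_mapRange_of_injective _ c Rat.cast_injective]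
  simp only [Finsupp.mapRange_apply, Rat.norm_cast_real]

lemma relHomologous_chainToReal {Y : Set X} {z w : SingularChain n X ℚ}
    (h : RelHomologous Y z w) : RelHomologous Y (chainToReal z) (chainToReal w) := by
  obtain ⟨b, hb⟩ := h
  refine ⟨chainToReal b, fun σ hσ => ?_⟩
  rw [← chainToReal_chainBoundarySucc, ← chainToReal_sub, ← chainToReal_sub]
  simp [chainToReal, hb σ hσ]

lemma exists_l1Norm_sub_chainToReal_lt (b : SingularChain n X ℝ) {δ : ℝ} (hδ : 0 < δ) :
    ∃ q : SingularChain n X ℚ, l1Norm (b - chainToReal q) < δ := by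
  induction b using Finsupp.induction_linear generalizing δ with
  | zero => exact ⟨0, by simpa [l1Norm, chainToReal]⟩
  | add c d hc hd =>
    obtain ⟨q, hq⟩ := hc (half_pos hδ)
    obtain ⟨r, hr⟩ := hd (half_pos hδ)
    refine ⟨q + r, ?_⟩
    calc l1Norm (c + d - chainToReal (q + r))
        = l1Norm ((c - chainToReal q) + (d - chainToReal r)) := by
          rw [show chainToReal (q + r) = chainToReal q + chainToReal r from
            Finsupp.mapRange_add Rat.cast_add q r, add_sub_add_comm]
      _ < δ := by linarith [l1Norm_add_le (c - chainToReal q) (d - chainToReal r)]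
  | single σ a =>
    obtain ⟨q, hq⟩ := exists_rat_near a hδ
    refine ⟨Finsupp.single σ q, ?_⟩
    rwa [chainToReal, Finsupp.mapRange_single, ← Finsupp.single_sub, l1Norm_single]

lemma relNorm_sub_chainBoundarySucc_le {Y : Set X} {z : SingularChain n X ℚ}
    {w : SingularChain n X ℝ} {b : SingularChain (n + 1) X ℝ}
    (hb : ∀ σ, ¬ SimplexIn Y σ → (chainToReal z - w - chainBoundarySucc b) σ = 0)
    (q : SingularChain (n + 1) X ℚ) :
    relNorm Y (z - chainBoundarySucc q) ≤ relNorm Y w + (n + 2) * l1Norm (b - chainToReal q) := by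
  have off_Y : relNorm Y (chainToReal (z - chainBoundarySucc q)) =
      relNorm Y (w + chainBoundarySucc (b - chainToReal q)) := by
    refine relNorm_congr Y fun σ hσ => ?_
    have hbσ := hb σ hσ
    rw [chainToReal_sub, chainToReal_chainBoundarySucc, chainBoundarySucc_sub]
    simp only [Finsupp.sub_apply, Finsupp.add_apply] at hbσ ⊢
    linarith
  calc relNorm Y (z - chainBoundarySucc q)
      = relNorm Y (w + chainBoundarySucc (b - chainToReal q)) := by
        rw [← off_Y, relNorm_chainToReal]
    _ ≤ relNorm Y w + l1Norm (chainBoundarySucc (b - chainToReal q)) :=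
        (relNorm_add_le Y _ _).trans (add_le_add_right (relNorm_le_l1Norm Y _) _)
    _ ≤ relNorm Y w + (n + 2) * l1Norm (b - chainToReal q) := by
        grw [l1Norm_chainBoundarySucc_le]

end RatToReal

end ChainNorms

theorem rat_to_real_norm_preserving_general {X : Type*} [TopologicalSpace X] (Y : Set X)
    (i : ℕ) (z : SingularChain i X ℚ) :
    classNorm Y (chainToReal z) = classNorm Y z := by
  refine le_antisymm (le_classNorm fun w hw => ?_) (le_classNorm fun w ⟨b, hb⟩ => ?_)
  · rw [← relNorm_chainToReal]
    exact classNorm_le_relNorm (relHomologous_chainToReal hw)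
  · refine le_of_forall_pos_le_add fun ε hε => ?_
    have hi : (0 : ℝ) < i + 2 := by positivity
    obtain ⟨q, hq⟩ := exists_l1Norm_sub_chainToReal_lt b (div_pos hε hi)
    calc classNorm Y z ≤ relNorm Y (z - chainBoundarySucc q) :=
          classNorm_le_relNorm (relHomologous_sub_chainBoundarySucc Y z q)
      _ ≤ relNorm Y w + (i + 2) * l1Norm (b - chainToReal q) :=
          relNorm_sub_chainBoundarySucc_le hb q
      _ ≤ relNorm Y w + ε := by
          grw [← ((lt_div_iff₀' hi).mp hq).le]

/-- For every topological pair `(X, Y)` and every degree, the change of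
coefficients homomorphism `H_i(X, Y; ℚ) → H_i(X, Y; ℝ)` is norm-preserving for the
ℓ¹-seminorms: the ℓ¹-seminorm of the class of a rational relative cycle `z` equals the
ℓ¹-seminorm of the class of its image `chainToReal z` in real homology. -/
theorem rat_to_real_norm_preserving {X : Type*} [TopologicalSpace X] (Y : Set X)
    (i : ℕ) (z : SingularChain i X ℚ) (hz : IsRelCycle Y z) :
    classNorm Y (chainToReal z) = classNorm Y z :=
  rat_to_real_norm_preserving_general Y i z
end

section
/- There does not exist a 3-obtuse geodesic simplex in hyperbolic 3-space: no nondegenerate geodesic 3-simplex with nonideal vertices has a face F such that each of the three edges of F subtends a nonacute dihedral angle. -/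
open Real
noncomputable section

/-! We work in the Klein (projective) model of hyperbolic 3-space: points are the points
of the open unit ball of `ℝ³`, geodesics are Euclidean segments, so geodesic simplices are
Euclidean simplices.  Dihedral angles are computed in the hyperboloid model via the
Minkowski bilinear form on `ℝ⁴`, using outward spacelike normals of the faces. -/

/-- The Minkowski bilinear form of signature `(-,+,+,+)` on `ℝ⁴`. -/
def mink (x y : Fin 4 → ℝ) : ℝ := -(x 0 * y 0) + x 1 * y 1 + x 2 * y 2 + x 3 * y 3

/-- The (projective) lift of a point of the Klein ball to `ℝ⁴`. -/
def kleinLift (p : EuclideanSpace ℝ (Fin 3)) : Fin 4 → ℝ := ![1, p 0, p 1, p 2]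

/-- A geodesic 3-simplex in hyperbolic 3-space with nonideal vertices, in the Klein model:
the convex hull of `4` affinely independent points of the open unit ball ("nondegenerate"
means not contained in a plane, i.e. affinely independent vertices). -/
structure GeodesicSimplex3 where
  v : Fin 4 → EuclideanSpace ℝ (Fin 3)
  mem_ball : ∀ i, ‖v i‖ < 1
  indep : AffineIndependent ℝ v

/-- An outward spacelike Minkowski normal of the face of `Δ` opposite to the vertex `k`:
Minkowski-orthogonal to the lifts of the other three vertices, negative on the lift of the
omitted vertex `k`, and spacelike.  (It is unique up to a positive scalar; we choose one.) -/
def outwardNormal (Δ : GeodesicSimplex3) (k : Fin 4) : Fin 4 → ℝ :=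
  Classical.epsilon fun nv =>
    (∀ a, a ≠ k → mink nv (kleinLift (Δ.v a)) = 0) ∧
      mink nv (kleinLift (Δ.v k)) < 0 ∧ 0 < mink nv nv

/-- The dihedral angle of `Δ` between the faces opposite to the vertices `k` and `l`,
i.e. the dihedral angle at the edge joining the remaining two vertices, computed by the
standard formula `cos α = -⟨n_k, n_l⟩/√(⟨n_k,n_k⟩⟨n_l,n_l⟩)` for outward normals. -/
def dihedralAngleFaces (Δ : GeodesicSimplex3) (k l : Fin 4) : ℝ :=
  arccos (-(mink (outwardNormal Δ k) (outwardNormal Δ l)) /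
    sqrt (mink (outwardNormal Δ k) (outwardNormal Δ k) *
      mink (outwardNormal Δ l) (outwardNormal Δ l)))

/-- The edge of `Δ` joining the vertices `i ≠ j` subtends a nonacute (`≥ π/2`) dihedral
angle: the dihedral angle between the two faces containing this edge — the faces opposite
to the two remaining vertices `k`, `l` — is at least `π/2`. -/
def SubtendsNonacute (Δ : GeodesicSimplex3) (i j : Fin 4) : Prop :=
  ∃ k l : Fin 4, ({i, j, k, l} : Finset (Fin 4)) = Finset.univ ∧
    π / 2 ≤ dihedralAngleFaces Δ k l

end

/-! Lift the Klein ball to Minkowski space. Pairing with the lifted vertices `L_b` shows that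
the lift `L` of any point of the ball is a positive combination `∑ d_b n_b` of the outward
normals: `d_b = ⟨L, L_b⟩ / ⟨n_b, L_b⟩` is a quotient of two negative numbers. For the vertex
`m` this gives `0 > ⟨n_m, L_m⟩ = d_m ⟨n_m, n_m⟩ + ∑_{b ≠ m} d_b ⟨n_m, n_b⟩` with `n_m`
spacelike, so some face adjacent to the face opposite `m` has `⟨n_m, n_b⟩ < 0`: the dihedral
angle at their common edge, an edge of that face, is acute. -/

open Finset

lemma mink_comm (x y : Fin 4 → ℝ) : mink x y = mink y x := by
  unfold mink; ring

def minkForm : LinearMap.BilinForm ℝ (Fin 4 → ℝ) :=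
  LinearMap.mk₂ ℝ mink (fun _ _ _ => by simp only [mink, Pi.add_apply]; ring)
    (fun _ _ _ => by simp only [mink, Pi.smul_apply, smul_eq_mul]; ring)
    (fun _ _ _ => by simp only [mink, Pi.add_apply]; ring)
    (fun _ _ _ => by simp only [mink, Pi.smul_apply, smul_eq_mul]; ring)

@[simp]
lemma minkForm_apply (x y : Fin 4 → ℝ) : minkForm x y = mink x y := rfl

lemma eq_zero_of_forall_mink_eq_zero {x : Fin 4 → ℝ} (h : ∀ y, mink x y = 0) : x = 0 := by
  funext i
  have := h (Pi.single i 1)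
  fin_cases i <;> simpa [mink] using this

lemma minkForm_nondegenerate : minkForm.Nondegenerate :=
  ⟨fun _ hx => eq_zero_of_forall_mink_eq_zero hx,
    fun y hy => eq_zero_of_forall_mink_eq_zero fun x => mink_comm y x ▸ hy x⟩

lemma mink_sum_smul_right {ι : Type*} (s : Finset ι) (x : Fin 4 → ℝ) (g : ι → ℝ)
    (v : ι → Fin 4 → ℝ) : mink x (∑ b ∈ s, g b • v b) = ∑ b ∈ s, g b * mink x (v b) := by
  simp [← minkForm_apply, map_sum]

lemma mink_self_pos_of_mink_eq_zero {x t : Fin 4 → ℝ} (ht : mink t t < 0) (hxt : mink x t = 0)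
    (hx : x ≠ 0) : 0 < mink x x := by
  unfold mink at *
  by_contra! hle
  set s := x 1 ^ 2 + x 2 ^ 2 + x 3 ^ 2
  set T := t 1 ^ 2 + t 2 ^ 2 + t 3 ^ 2
  have hcs : (x 0 * t 0) ^ 2 ≤ s * T := by
    rw [show x 0 * t 0 = x 1 * t 1 + x 2 * t 2 + x 3 * t 3 by linarith]
    nlinarith [sq_nonneg (x 1 * t 2 - x 2 * t 1), sq_nonneg (x 1 * t 3 - x 3 * t 1),
      sq_nonneg (x 2 * t 3 - x 3 * t 2)]
  have hsT : s * T ≤ x 0 ^ 2 * T :=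
    mul_le_mul_of_nonneg_right (by linarith) (by positivity)
  have hx0 : x 0 = 0 := by
    have : x 0 ^ 2 * (t 0 ^ 2 - T) ≤ 0 := by nlinarith
    exact pow_eq_zero_iff two_ne_zero |>.mp <|
      le_antisymm (nonpos_of_mul_nonpos_left this (by linarith)) (sq_nonneg _)
  refine hx (funext fun i => ?_)
  fin_cases i <;> simp <;> nlinarith [sq_nonneg (x 1), sq_nonneg (x 2), sq_nonneg (x 3)]

lemma mink_kleinLift_kleinLift (p q : EuclideanSpace ℝ (Fin 3)) :
    mink (kleinLift p) (kleinLift q) = inner ℝ p q - 1 := by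
  simp [mink, kleinLift, PiLp.inner_apply, Fin.sum_univ_three]
  ring

lemma mink_kleinLift_neg {p q : EuclideanSpace ℝ (Fin 3)} (hp : ‖p‖ < 1) (hq : ‖q‖ < 1) :
    mink (kleinLift p) (kleinLift q) < 0 := by
  rw [mink_kleinLift_kleinLift, sub_neg]
  calc inner ℝ p q ≤ ‖p‖ * ‖q‖ := real_inner_le_norm p q
    _ < 1 := mul_lt_one_of_nonneg_of_lt_one_left (norm_nonneg p) hp hq.le

lemma linearIndependent_kleinLift {ι : Type*} [Fintype ι] {p : ι → EuclideanSpace ℝ (Fin 3)}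
    (hp : AffineIndependent ℝ p) : LinearIndependent ℝ (kleinLift ∘ p) := by
  rw [Fintype.linearIndependent_iff]
  intro g hg
  have hsum : ∑ a, g a = 0 := by
    simpa [kleinLift, Finset.sum_apply] using congrFun hg 0
  refine (affineIndependent_iff_of_fintype ℝ p).mp hp g hsum ?_
  rw [Finset.weightedVSub_eq_linear_combination _ hsum]
  ext j
  have := congrFun hg j.succ
  fin_cases j <;> simpa [kleinLift, Finset.sum_apply] using this

lemma exists_insert_eq_univ_of_ne : ∀ m a : Fin 4, a ≠ m →
    ∃ i j, i ≠ j ∧ i ≠ m ∧ j ≠ m ∧ ({i, j, m, a} : Finset (Fin 4)) = univ := by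
  decide

lemma eq_and_eq_or_of_insert_eq_univ : ∀ i j k l m a : Fin 4,
    ({i, j, k, l} : Finset (Fin 4)) = univ → ({i, j, m, a} : Finset (Fin 4)) = univ →
      (k = m ∧ l = a) ∨ (k = a ∧ l = m) := by
  decide

section Simplex

variable (Δ : GeodesicSimplex3)

noncomputable def liftBasis : Module.Basis (Fin 4) ℝ (Fin 4 → ℝ) :=
  basisOfLinearIndependentOfCardEqFinrank (linearIndependent_kleinLift Δ.indep) (by simp)

lemma liftBasis_apply (a : Fin 4) : liftBasis Δ a = kleinLift (Δ.v a) :=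
  congrFun (coe_basisOfLinearIndependentOfCardEqFinrank _ _) a

noncomputable def dualLiftBasis : Module.Basis (Fin 4) ℝ (Fin 4 → ℝ) :=
  minkForm.dualBasis minkForm_nondegenerate (liftBasis Δ)

lemma mink_dualLiftBasis_kleinLift (k a : Fin 4) :
    mink (dualLiftBasis Δ k) (kleinLift (Δ.v a)) = if a = k then 1 else 0 := by
  rw [← liftBasis_apply, ← minkForm_apply, dualLiftBasis,
    LinearMap.BilinForm.apply_dualBasis_left]

lemma outwardNormal_spec (k : Fin 4) :
    (∀ a, a ≠ k → mink (outwardNormal Δ k) (kleinLift (Δ.v a)) = 0) ∧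
      mink (outwardNormal Δ k) (kleinLift (Δ.v k)) < 0 ∧
      0 < mink (outwardNormal Δ k) (outwardNormal Δ k) := by
  refine Classical.epsilon_spec (p := fun nv => (∀ a, a ≠ k → mink nv (kleinLift (Δ.v a)) = 0) ∧
    mink nv (kleinLift (Δ.v k)) < 0 ∧ 0 < mink nv nv) ⟨-dualLiftBasis Δ k, ?_⟩
  have hlift (a : Fin 4) :
      mink (-dualLiftBasis Δ k) (kleinLift (Δ.v a)) = -if a = k then 1 else 0 := by
    rw [← minkForm_apply, map_neg, LinearMap.neg_apply, minkForm_apply,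
      mink_dualLiftBasis_kleinLift]
  have horth (a : Fin 4) (ha : a ≠ k) : mink (-dualLiftBasis Δ k) (kleinLift (Δ.v a)) = 0 := by
    simp [hlift, ha]
  have hneg : mink (-dualLiftBasis Δ k) (kleinLift (Δ.v k)) < 0 := by simp [hlift]
  obtain ⟨a, ha⟩ := exists_ne k
  refine ⟨horth, hneg, mink_self_pos_of_mink_eq_zero
    (mink_kleinLift_neg (Δ.mem_ball a) (Δ.mem_ball a)) (horth a ha) fun h => ?_⟩
  rw [h] at hneg
  simp [mink] at hneg

lemma mink_outwardNormal_kleinLift_of_ne {k a : Fin 4} (ha : a ≠ k) :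
    mink (outwardNormal Δ k) (kleinLift (Δ.v a)) = 0 :=
  (outwardNormal_spec Δ k).1 a ha

lemma mink_outwardNormal_kleinLift_self_neg (k : Fin 4) :
    mink (outwardNormal Δ k) (kleinLift (Δ.v k)) < 0 :=
  (outwardNormal_spec Δ k).2.1

lemma mink_outwardNormal_self_pos (k : Fin 4) :
    0 < mink (outwardNormal Δ k) (outwardNormal Δ k) :=
  (outwardNormal_spec Δ k).2.2

lemma outwardNormal_eq_smul_dualLiftBasis (k : Fin 4) :
    outwardNormal Δ k = mink (outwardNormal Δ k) (kleinLift (Δ.v k)) • dualLiftBasis Δ k := by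
  refine (dualLiftBasis Δ).ext_elem fun a => ?_
  rw [dualLiftBasis, LinearMap.BilinForm.dualBasis_repr_apply, ← dualLiftBasis]
  by_cases ha : a = k
  · simp [ha, liftBasis_apply]
  · simp [Ne.symm ha, liftBasis_apply, mink_outwardNormal_kleinLift_of_ne Δ ha]

lemma kleinLift_eq_sum_smul_outwardNormal {p : EuclideanSpace ℝ (Fin 3)} (hp : ‖p‖ < 1) :
    ∃ d : Fin 4 → ℝ, (∀ b, 0 < d b) ∧ kleinLift p = ∑ b, d b • outwardNormal Δ b := by
  refine ⟨fun b => mink (kleinLift p) (kleinLift (Δ.v b)) /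
    mink (outwardNormal Δ b) (kleinLift (Δ.v b)), fun b => div_pos_of_neg_of_neg
      (mink_kleinLift_neg hp (Δ.mem_ball b)) (mink_outwardNormal_kleinLift_self_neg Δ b), ?_⟩
  conv_lhs => rw [← (dualLiftBasis Δ).sum_repr (kleinLift p)]
  refine Finset.sum_congr rfl fun b _ => ?_
  have hb := (mink_outwardNormal_kleinLift_self_neg Δ b).ne
  calc _ = mink (kleinLift p) (kleinLift (Δ.v b)) • dualLiftBasis Δ b := by
        rw [dualLiftBasis, LinearMap.BilinForm.dualBasis_repr_apply, minkForm_apply,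
          liftBasis_apply]
    _ = _ := by
        rw [outwardNormal_eq_smul_dualLiftBasis Δ b, smul_smul, div_mul_cancel₀ _ hb]

lemma exists_mink_outwardNormal_neg (m : Fin 4) :
    ∃ a ≠ m, mink (outwardNormal Δ m) (outwardNormal Δ a) < 0 := by
  by_contra! h
  obtain ⟨d, hd, hsum⟩ := kleinLift_eq_sum_smul_outwardNormal Δ (Δ.mem_ball m)
  have : 0 < mink (outwardNormal Δ m) (kleinLift (Δ.v m)) := by
    rw [hsum, mink_sum_smul_right, ← Finset.add_sum_erase _ _ (mem_univ m)]
    exact add_pos_of_pos_of_nonneg (mul_pos (hd m) (mink_outwardNormal_self_pos Δ m))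
      (sum_nonneg fun a ha => mul_nonneg (hd a).le (h a (ne_of_mem_erase ha)))
  exact (mink_outwardNormal_kleinLift_self_neg Δ m).not_gt this

lemma dihedralAngleFaces_comm (k l : Fin 4) :
    dihedralAngleFaces Δ k l = dihedralAngleFaces Δ l k := by
  rw [dihedralAngleFaces, dihedralAngleFaces, mink_comm (outwardNormal Δ k), mul_comm]

lemma dihedralAngleFaces_eq_of_insert_eq_univ {i j k l m a : Fin 4}
    (hkl : ({i, j, k, l} : Finset (Fin 4)) = univ) (hma : ({i, j, m, a} : Finset (Fin 4)) = univ) :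
    dihedralAngleFaces Δ k l = dihedralAngleFaces Δ m a := by
  rcases eq_and_eq_or_of_insert_eq_univ i j k l m a hkl hma with ⟨rfl, rfl⟩ | ⟨rfl, rfl⟩
  · rfl
  · exact dihedralAngleFaces_comm Δ k l

lemma mink_outwardNormal_nonneg_of_pi_div_two_le {k l : Fin 4}
    (h : π / 2 ≤ dihedralAngleFaces Δ k l) :
    0 ≤ mink (outwardNormal Δ k) (outwardNormal Δ l) := by
  have hden : 0 < √(mink (outwardNormal Δ k) (outwardNormal Δ k) *
      mink (outwardNormal Δ l) (outwardNormal Δ l)) :=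
    sqrt_pos.mpr (mul_pos (mink_outwardNormal_self_pos Δ k) (mink_outwardNormal_self_pos Δ l))
  rw [dihedralAngleFaces, ← not_lt, arccos_lt_pi_div_two, not_lt, neg_div, neg_nonpos] at h
  simpa using (le_div_iff₀ hden).mp h

end Simplex

/-- There is no 3-obtuse geodesic simplex in hyperbolic 3-space: no
nondegenerate geodesic 3-simplex with nonideal vertices has a 2-face `F` (the face opposite
some vertex `m`) such that each of the three edges of `F` subtends a nonacute dihedral
angle. -/
theorem no_three_obtuse_simplex (Δ : GeodesicSimplex3) :
    ¬ ∃ m : Fin 4, ∀ i j : Fin 4, i ≠ j → i ≠ m → j ≠ m → SubtendsNonacute Δ i j := by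
  rintro ⟨m, hm⟩
  obtain ⟨a, ham, hacute⟩ := exists_mink_outwardNormal_neg Δ m
  obtain ⟨i, j, hij, him, hjm, hface⟩ := exists_insert_eq_univ_of_ne m a ham
  obtain ⟨k, l, hkl, hangle⟩ := hm i j hij him hjm
  rw [dihedralAngleFaces_eq_of_insert_eq_univ Δ hkl hface] at hangle
  exact hacute.not_ge (mink_outwardNormal_nonneg_of_pi_div_two_le Δ hangle)
end

section
/- Let P be an orientable 3-dimensional pseudomanifold associated to a straight integral relative cycle on a hyperbolic 3-manifold M with geodesic boundary, with no simplex supported on ∂M. Then every tetrahedron of P has at most one 2-dimensional boundary face, every tetrahedron has at most three edges contained in |∂P|, and every tetrahedron without boundary 2-faces has at most two edges contained in |∂P|. -/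
open scoped Classical
noncomputable section

/-! **Statement 16.**  We work in the Klein (projective) model: the universal cover of a
hyperbolic 3-manifold `M` with geodesic boundary is a convex subset of the open unit ball
`B ⊆ ℝ³` bounded by a family of geodesic planes `P i` (intersections with affine
hyperplanes) which are pairwise disjoint inside the ball.  A straight (geodesic) simplex of
a straight relative cycle on `M` lifts to the geodesic simplex spanned by lifted vertices
`v 0, …, v 3 ∈ B`; an `m`-face of the straightened simplex is supported on `∂M` exactly
when its `m + 1` vertices lie on one of the boundary planes.  That the simplex is not
supported on `∂M` means that not all four vertices lie on a single boundary plane. -/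

variable {ι : Type*}

/-- The face of the tetrahedron `v` opposite to the vertex `k` lies on the geodesic
boundary: the remaining three vertices lie on a common boundary plane. -/
def FaceOnBoundary (P : ι → Set (EuclideanSpace ℝ (Fin 3)))
    (v : Fin 4 → EuclideanSpace ℝ (Fin 3)) (k : Fin 4) : Prop :=
  ∃ i, ∀ a, a ≠ k → v a ∈ P i

/-- The edge `e` (an unordered pair of vertices) of the tetrahedron `v` lies on the
geodesic boundary: both of its endpoints lie on a common boundary plane. -/
def EdgeOnBoundary (P : ι → Set (EuclideanSpace ℝ (Fin 3)))
    (v : Fin 4 → EuclideanSpace ℝ (Fin 3)) (e : Sym2 (Fin 4)) : Prop :=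
  ∃ i, ∀ a ∈ e, v a ∈ P i

/-! Distinct boundary planes are disjoint inside the ball, so each vertex lies on at most one
of them and "joined by a boundary edge" partitions the boundary vertices by plane. A plane
carries at most three of the vertices, and three only if they span a boundary face. Hence every
vertex has at most two boundary edges, none if it is the apex over a boundary face, and at most
one if there is no boundary face; the handshake lemma turns these degree bounds into the edge
bounds. -/

open Finset

theorem SimpleGraph.two_mul_card_edgeFinset_le_of_degree_le {V : Type*} [Fintype V]
    (G : SimpleGraph V) [DecidableRel G.Adj] {d : ℕ}
    (h : ∀ a, G.degree a ≤ d) : 2 * #G.edgeFinset ≤ Fintype.card V * d := by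
  rw [← G.sum_degrees_eq_twice_card_edges, ← smul_eq_mul, ← card_univ, ← sum_const]
  exact sum_le_sum fun a _ => h a

theorem SimpleGraph.two_mul_card_edgeFinset_le_of_degree_eq_zero {V : Type*} [Fintype V]
    [DecidableEq V] (G : SimpleGraph V) [DecidableRel G.Adj] {d : ℕ}
    (h : ∀ a, G.degree a ≤ d) {k : V} (hk : G.degree k = 0) :
    2 * #G.edgeFinset ≤ (Fintype.card V - 1) * d := by
  rw [← G.sum_degrees_eq_twice_card_edges, ← sum_erase_add _ _ (mem_univ k), hk, add_zero,
    ← card_univ, ← card_erase_of_mem (mem_univ k), ← smul_eq_mul, ← sum_const]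
  exact sum_le_sum fun a _ => h a

theorem exists_forall_ne_mem_of_card_le {α : Type*} [Fintype α] [Nonempty α]
    {s : Finset α} (h : Fintype.card α ≤ #s + 1) : ∃ k, ∀ a, a ≠ k → a ∈ s := by
  have hc : #sᶜ ≤ 1 := by rw [card_compl]; omega
  obtain hs | ⟨k, hk⟩ := sᶜ.eq_empty_or_nonempty
  · rw [Finset.compl_eq_empty_iff] at hs
    exact ⟨Classical.arbitrary α, fun a _ => hs ▸ mem_univ a⟩
  · exact ⟨k, fun a hak => by_contra fun has => hak (card_le_one.mp hc a (mem_compl.mpr has) k hk)⟩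

namespace StraightTetrahedron

variable {P : ι → Set (EuclideanSpace ℝ (Fin 3))} {v : Fin 4 → EuclideanSpace ℝ (Fin 3)}

theorem subsingleton_setOf_mem_of_mem_ball
    (hdisj : ∀ i j, i ≠ j → P i ∩ P j ∩ Metric.ball (0 : EuclideanSpace ℝ (Fin 3)) 1 = ∅)
    {x : EuclideanSpace ℝ (Fin 3)} (hx : x ∈ Metric.ball 0 1) : {i | x ∈ P i}.Subsingleton :=
  fun i hi j hj => by_contra fun hij => (hdisj i j hij ▸ ⟨⟨hi, hj⟩, hx⟩ : x ∈ (∅ : Set _))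

def boundaryGraph (P : ι → Set (EuclideanSpace ℝ (Fin 3)))
    (v : Fin 4 → EuclideanSpace ℝ (Fin 3)) : SimpleGraph (Fin 4) :=
  SimpleGraph.fromEdgeSet {e | EdgeOnBoundary P v e}

theorem boundaryGraph_adj {a b : Fin 4} :
    (boundaryGraph P v).Adj a b ↔ a ≠ b ∧ ∃ i, v a ∈ P i ∧ v b ∈ P i := by
  simp [boundaryGraph, EdgeOnBoundary, and_comm]

theorem edgeFinset_boundaryGraph : (boundaryGraph P v).edgeFinset =
    univ.filter fun e : Sym2 (Fin 4) => ¬ e.IsDiag ∧ EdgeOnBoundary P v e := by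
  ext e
  rw [SimpleGraph.mem_edgeFinset]
  simp [boundaryGraph, and_comm]

theorem card_filter_mem_le_three (hnot : ¬ ∃ i, ∀ a, v a ∈ P i) (i : ι) :
    #{a | v a ∈ P i} ≤ 3 := by
  obtain ⟨a, ha⟩ := not_forall.mp (not_exists.mp hnot i)
  have := card_lt_univ_of_notMem (s := {a | v a ∈ P i}) (x := a) (by simpa using ha)
  simp only [Fintype.card_fin] at this
  omega

theorem card_filter_mem_le_two (hnoface : ¬ ∃ k, FaceOnBoundary P v k) (i : ι) :
    #{a | v a ∈ P i} ≤ 2 := by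
  by_contra! h
  obtain ⟨k, hk⟩ := exists_forall_ne_mem_of_card_le (s := {a | v a ∈ P i})
    (by simp only [Fintype.card_fin]; omega)
  exact hnoface ⟨k, i, fun a hak => (mem_filter.mp (hk a hak)).2⟩

theorem forall_mem_of_faceOnBoundary_of_mem (hunique : ∀ a, {i | v a ∈ P i}.Subsingleton)
    {k b : Fin 4} {i j : ι} (hi : ∀ a, a ≠ k → v a ∈ P i) (hbk : b ≠ k) (hb : v b ∈ P j)
    (hk : v k ∈ P j) (a : Fin 4) : v a ∈ P i := by
  obtain rfl := hunique b (hi b hbk) hb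
  exact if hak : a = k then hak ▸ hk else hi a hak

theorem faceOnBoundary_unique (hunique : ∀ a, {i | v a ∈ P i}.Subsingleton)
    (hnot : ¬ ∃ i, ∀ a, v a ∈ P i) {k l : Fin 4} (hk : FaceOnBoundary P v k)
    (hl : FaceOnBoundary P v l) : k = l := by
  obtain ⟨i, hi⟩ := hk
  obtain ⟨j, hj⟩ := hl
  by_contra hkl
  obtain ⟨b, -, hb⟩ := exists_mem_notMem_of_card_lt_card (s := {k, l}) (t := univ)
    (card_le_two.trans_lt (by simp))
  simp only [mem_insert, mem_singleton, not_or] at hb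
  exact hnot ⟨i, forall_mem_of_faceOnBoundary_of_mem hunique hi hb.1 (hj b hb.2) (hj k hkl)⟩

theorem degree_add_one_le (hunique : ∀ a, {i | v a ∈ P i}.Subsingleton)
    {a : Fin 4} {i : ι} (ha : v a ∈ P i) :
    (boundaryGraph P v).degree a + 1 ≤ #{b | v b ∈ P i} := by
  rw [← SimpleGraph.card_neighborFinset_eq_degree,
    ← card_insert_of_notMem (SimpleGraph.notMem_neighborFinset_self _ a)]
  refine card_le_card fun b hb => ?_
  rw [mem_insert, SimpleGraph.mem_neighborFinset, boundaryGraph_adj] at hb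
  obtain rfl | ⟨-, j, haj, hbj⟩ := hb
  · simpa using ha
  · simpa [hunique a ha haj] using hbj

theorem degree_eq_zero_of_forall_notMem {a : Fin 4} (ha : ∀ i, v a ∉ P i) :
    (boundaryGraph P v).degree a = 0 := by
  rw [← SimpleGraph.card_neighborFinset_eq_degree, card_eq_zero, eq_empty_iff_forall_notMem]
  intro b hb
  rw [SimpleGraph.mem_neighborFinset, boundaryGraph_adj] at hb
  obtain ⟨-, i, hai, -⟩ := hb
  exact ha i hai

theorem degree_le_of_card_filter_mem_le (hunique : ∀ a, {i | v a ∈ P i}.Subsingleton)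
    {m : ℕ} (hm : ∀ i, #{b | v b ∈ P i} ≤ m + 1) (a : Fin 4) :
    (boundaryGraph P v).degree a ≤ m := by
  by_cases ha : ∃ i, v a ∈ P i
  · obtain ⟨i, ha⟩ := ha
    have := degree_add_one_le hunique ha
    have := hm i
    omega
  · simp [degree_eq_zero_of_forall_notMem (not_exists.mp ha)]

theorem degree_eq_zero_of_faceOnBoundary (hunique : ∀ a, {i | v a ∈ P i}.Subsingleton)
    (hnot : ¬ ∃ i, ∀ a, v a ∈ P i) {k : Fin 4} (hk : FaceOnBoundary P v k) :
    (boundaryGraph P v).degree k = 0 := by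
  obtain ⟨i, hi⟩ := hk
  rw [← SimpleGraph.card_neighborFinset_eq_degree, card_eq_zero, eq_empty_iff_forall_notMem]
  intro b hb
  rw [SimpleGraph.mem_neighborFinset, boundaryGraph_adj] at hb
  obtain ⟨hkb, j, hkj, hbj⟩ := hb
  exact hnot ⟨i, forall_mem_of_faceOnBoundary_of_mem hunique hi hkb.symm hbj hkj⟩

theorem card_edgeFinset_boundaryGraph_le_two
    (hunique : ∀ a, {i | v a ∈ P i}.Subsingleton)
    (hnoface : ¬ ∃ k, FaceOnBoundary P v k) : #(boundaryGraph P v).edgeFinset ≤ 2 := by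
  have := (boundaryGraph P v).two_mul_card_edgeFinset_le_of_degree_le
    (degree_le_of_card_filter_mem_le hunique (m := 1) (card_filter_mem_le_two hnoface))
  simp only [Fintype.card_fin] at this
  omega

theorem card_edgeFinset_boundaryGraph_le_three
    (hunique : ∀ a, {i | v a ∈ P i}.Subsingleton)
    (hnot : ¬ ∃ i, ∀ a, v a ∈ P i) : #(boundaryGraph P v).edgeFinset ≤ 3 := by
  by_cases hface : ∃ k, FaceOnBoundary P v k
  · obtain ⟨k, hk⟩ := hface
    have := (boundaryGraph P v).two_mul_card_edgeFinset_le_of_degree_eq_zero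
      (degree_le_of_card_filter_mem_le hunique (m := 2) (card_filter_mem_le_three hnot))
      (degree_eq_zero_of_faceOnBoundary hunique hnot hk)
    simp only [Fintype.card_fin] at this
    omega
  · exact (card_edgeFinset_boundaryGraph_le_two hunique hface).trans (by norm_num)

end StraightTetrahedron

open StraightTetrahedron

theorem straight_tetrahedron_boundary_faces_and_edges_general
    (P : ι → Set (EuclideanSpace ℝ (Fin 3)))
    (hdisj : ∀ i j, i ≠ j → P i ∩ P j ∩ Metric.ball (0 : EuclideanSpace ℝ (Fin 3)) 1 = ∅)
    (v : Fin 4 → EuclideanSpace ℝ (Fin 3))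
    (hv : ∀ a, v a ∈ Metric.ball (0 : EuclideanSpace ℝ (Fin 3)) 1)
    (hnot : ¬ ∃ i, ∀ a, v a ∈ P i) :
    (∀ k l : Fin 4, FaceOnBoundary P v k → FaceOnBoundary P v l → k = l) ∧
      (Finset.univ.filter fun e : Sym2 (Fin 4) =>
          ¬ e.IsDiag ∧ EdgeOnBoundary P v e).card ≤ 3 ∧
      ((¬ ∃ k, FaceOnBoundary P v k) →
        (Finset.univ.filter fun e : Sym2 (Fin 4) =>
          ¬ e.IsDiag ∧ EdgeOnBoundary P v e).card ≤ 2) := by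
  have hunique a : {i | v a ∈ P i}.Subsingleton := subsingleton_setOf_mem_of_mem_ball hdisj (hv a)
  rw [← edgeFinset_boundaryGraph]
  exact ⟨fun _ _ => faceOnBoundary_unique hunique hnot,
    card_edgeFinset_boundaryGraph_le_three hunique hnot,
    card_edgeFinset_boundaryGraph_le_two hunique⟩

/-- Let `P` be a family of geodesic planes (affine hyperplanes) which
are pairwise disjoint inside the open unit ball, and let `v` be the vertices (inside the
ball, i.e. nonideal) of a straight tetrahedron of the pseudomanifold `P` associated to a
straight integral relative cycle on `M`, not supported on the boundary (not all four
vertices on a single boundary plane).  Then: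
(1) the tetrahedron has at most one 2-dimensional boundary face;
(2) it has at most three edges contained in `|∂P|`; and
(3) if it has no boundary 2-face, it has at most two edges contained in `|∂P|`. -/
theorem straight_tetrahedron_boundary_faces_and_edges
    (P : ι → Set (EuclideanSpace ℝ (Fin 3)))
    (hplane : ∀ i, ∃ f : (EuclideanSpace ℝ (Fin 3)) →ᵃ[ℝ] ℝ,
      f.linear ≠ 0 ∧ P i = f ⁻¹' {0})
    (hdisj : ∀ i j, i ≠ j → P i ∩ P j ∩ Metric.ball (0 : EuclideanSpace ℝ (Fin 3)) 1 = ∅)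
    (v : Fin 4 → EuclideanSpace ℝ (Fin 3))
    (hv : ∀ a, v a ∈ Metric.ball (0 : EuclideanSpace ℝ (Fin 3)) 1)
    (hnot : ¬ ∃ i, ∀ a, v a ∈ P i) :
    (∀ k l : Fin 4, FaceOnBoundary P v k → FaceOnBoundary P v l → k = l) ∧
      (Finset.univ.filter fun e : Sym2 (Fin 4) =>
          ¬ e.IsDiag ∧ EdgeOnBoundary P v e).card ≤ 3 ∧
      ((¬ ∃ k, FaceOnBoundary P v k) →
        (Finset.univ.filter fun e : Sym2 (Fin 4) =>
          ¬ e.IsDiag ∧ EdgeOnBoundary P v e).card ≤ 2) :=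
  straight_tetrahedron_boundary_faces_and_edges_general P hdisj v hv hnot

end
end
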